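/- For all integers n, m with m ≤ n, Σ_{j=m}^{n} (-1)^{n+j} js(n,j) · JS(j,m) = δ_{n,m} (biorthogonality of Jacobi-Stirling numbers of the first and second kind). -/

import Mathlib

/-- Jacobi-Stirling numbers of the second kind, defined by the triangular
recurrence and initial conditions. -/
def JS {R : Type*} [CommRing R] (γ : R) : ℕ → ℕ → R
  | 0, 0 => 1
  | _ + 1, 0 => 0
  | 0, _ + 1 => 0
  | n + 1, j + 1 => JS γ n j + ((j : R) + 1) * (((j : R) + 1) + 2 * γ - 1) * JS γ n (j + 1)

/-- Signless Jacobi-Stirling numbers of the first kind, defined by the triangular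
recurrence and initial conditions. -/
def js {R : Type*} [CommRing R] (γ : R) : ℕ → ℕ → R
  | 0, 0 => 1
  | _ + 1, 0 => 0
  | 0, _ + 1 => 0
  | n + 1, j + 1 => js γ n j + (n : R) * ((n : R) + 2 * γ - 1) * js γ n (j + 1)

/-!
Both triangles are driven by the same weights `w k = k (k + 2γ - 1)`:
`js (n+1) (j+1) = js n j + w n * js n (j+1)` and
`JS (j+1) (m+1) = JS j m + w (m+1) * JS j (m+1)`.
For the signed sum `S n m = ∑_{j ≤ n} (-1)^(n+j) js n j * JS j m` they give
`S (n+1) (m+1) = S n m + (w (m+1) - w n) * S n (m+1)`, so `S n m = δ n m` by induction on `n`: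
the second term vanishes because `S n (m+1) = 0` unless `n = m + 1`, when `w (m+1) - w n = 0`.
The terms with `j < m` vanish since `JS j m = 0`, which turns the sum over `j ≤ n` into the
one over `[m, n]`.
-/

open Finset

section JacobiStirling

variable {R : Type*} [CommRing R] (γ : R)

def jacobiStirlingWeight (k : ℕ) : R := k * (k + 2 * γ - 1)

theorem JS_succ_succ (n j : ℕ) :
    JS γ (n + 1) (j + 1) = JS γ n j + jacobiStirlingWeight γ (j + 1) * JS γ n (j + 1) := by
  rw [JS, jacobiStirlingWeight]
  push_cast
  ring

theorem js_succ_succ (n j : ℕ) :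
    js γ (n + 1) (j + 1) = js γ n j + jacobiStirlingWeight γ n * js γ n (j + 1) := by
  rw [js, jacobiStirlingWeight]

theorem JS_eq_zero_of_lt : ∀ {n j : ℕ}, n < j → JS γ n j = 0
  | 0, _ + 1, _ => rfl
  | n + 1, j + 1, h => by
    rw [JS_succ_succ, JS_eq_zero_of_lt (by omega), JS_eq_zero_of_lt (by omega), mul_zero, add_zero]

theorem js_eq_zero_of_lt : ∀ {n j : ℕ}, n < j → js γ n j = 0
  | 0, _ + 1, _ => rfl
  | n + 1, j + 1, h => by
    rw [js_succ_succ, js_eq_zero_of_lt (by omega), js_eq_zero_of_lt (by omega), mul_zero, add_zero]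

theorem sum_range_succ_shift_of_eq_zero {M : Type*} [AddCommMonoid M] (f : ℕ → M) (n : ℕ)
    (h₀ : f 0 = 0) (hn : f n = 0) :
    ∑ j ∈ range n, f (j + 1) = ∑ j ∈ range n, f j := by
  have h := sum_range_succ' f n
  rw [sum_range_succ, hn, h₀, add_zero, add_zero] at h
  exact h.symm

theorem sum_signed_js_succ_mul (g : ℕ → R) (hg : g 0 = 0) (n : ℕ) :
    ∑ j ∈ range (n + 2), (-1) ^ (n + 1 + j) * js γ (n + 1) j * g j =
      ∑ j ∈ range (n + 1),
        (-1) ^ (n + j) * js γ n j * (g (j + 1) - jacobiStirlingWeight γ n * g j) := by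
  have hshift : ∑ j ∈ range (n + 1), (-1) ^ (n + j) * js γ n (j + 1) * g (j + 1) =
      -∑ j ∈ range (n + 1), (-1) ^ (n + j) * js γ n j * g j := by
    rw [← sum_range_succ_shift_of_eq_zero (fun j => (-1) ^ (n + j) * js γ n j * g j) (n + 1)
      (by simp [hg]) (by simp [js_eq_zero_of_lt γ n.lt_succ_self]), ← sum_neg_distrib]
    refine sum_congr rfl fun j _ => ?_
    rw [← add_assoc, pow_succ]
    ring
  rw [sum_range_succ', hg, mul_zero, add_zero]
  calc ∑ j ∈ range (n + 1), (-1) ^ (n + 1 + (j + 1)) * js γ (n + 1) (j + 1) * g (j + 1)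
      = ∑ j ∈ range (n + 1), (-1) ^ (n + j) * js γ n j * g (j + 1) +
          jacobiStirlingWeight γ n *
            ∑ j ∈ range (n + 1), (-1) ^ (n + j) * js γ n (j + 1) * g (j + 1) := by
        rw [mul_sum, ← sum_add_distrib]
        refine sum_congr rfl fun j _ => ?_
        rw [js_succ_succ]
        ring
    _ = _ := by
        rw [hshift, mul_neg, ← sub_eq_add_neg, mul_sum, ← sum_sub_distrib]
        refine sum_congr rfl fun j _ => ?_
        ring

theorem sum_range_signed_js_mul_JS (n m : ℕ) :
    ∑ j ∈ range (n + 1), (-1 : R) ^ (n + j) * js γ n j * JS γ j m =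
      if n = m then 1 else 0 := by
  induction n generalizing m with
  | zero => cases m <;> simp [js, JS]
  | succ n ih =>
    cases m with
    | zero => simp [sum_range_succ', js, JS]
    | succ m =>
      set c := jacobiStirlingWeight γ (m + 1) - jacobiStirlingWeight γ n with hc
      have hcol (j : ℕ) : JS γ (j + 1) (m + 1) - jacobiStirlingWeight γ n * JS γ j (m + 1) =
          JS γ j m + c * JS γ j (m + 1) := by
        rw [JS_succ_succ]
        ring
      calc ∑ j ∈ range (n + 2), (-1 : R) ^ (n + 1 + j) * js γ (n + 1) j * JS γ j (m + 1)
          = ∑ j ∈ range (n + 1),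
              (-1) ^ (n + j) * js γ n j * (JS γ j m + c * JS γ j (m + 1)) := by
            simp only [sum_signed_js_succ_mul γ (JS γ · (m + 1)) rfl, hcol]
        _ = (if n = m then 1 else 0) + c * (if n = m + 1 then 1 else 0) := by
            rw [← ih, ← ih, mul_sum, ← sum_add_distrib]
            refine sum_congr rfl fun j _ => ?_
            ring
        _ = if n + 1 = m + 1 then 1 else 0 := by
            by_cases h : n = m + 1 <;> simp [h, hc]

end JacobiStirling

theorem JS_biorthogonality_first_general {R : Type*} [CommRing R] (γ : R) (n m : ℕ) :
    ∑ j ∈ Finset.Icc m n, (-1 : R) ^ (n + j) * js γ n j * JS γ j m =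
      if n = m then 1 else 0 := by
  rw [← sum_range_signed_js_mul_JS γ n m]
  refine sum_subset (fun j hj => ?_) fun j _ hj => ?_
  · simp only [mem_Icc, mem_range] at hj ⊢
    omega
  · rw [JS_eq_zero_of_lt γ (by simp_all), mul_zero]

/-- Biorthogonality of the Jacobi-Stirling numbers of the first and second kinds. -/
theorem JS_biorthogonality_first {R : Type*} [CommRing R] (γ : R) (n m : ℕ) (h : m ≤ n) :
    ∑ j ∈ Finset.Icc m n, (-1 : R) ^ (n + j) * js γ n j * JS γ j m =
      if n = m then 1 else 0 :=
  JS_biorthogonality_first_general γ n m
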